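/- The parallel reduction relation ⇒ of the calculus Fx satisfies the diamond property: if M ⇒ N and M ⇒ N', then there exists a term P such that N ⇒ P and N' ⇒ P. -/

import Mathlib

/-- Exception names (a countable set, taken to be ℕ). -/
abbrev ExnName := ℕ

/-- Terms of the calculus Fx (de Bruijn indices). -/
inductive Tm : Type
  | var : ℕ → Tm
  | lam : Tm → Tm
  | app : Tm → Tm → Tm
  | raise : ExnName → Tm
  | tryc : Tm → ExnName → Tm → Tm
  | zero : Tm
  | succ : Tm
  | natrec : Tm
  | nil : Tm
  | cons : Tm
  | foldr : Tm
  deriving DecidableEq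

namespace Tm

/-- Shifting of de Bruijn indices ≥ k. -/
def lift : ℕ → Tm → Tm
  | k, var i => if i < k then var i else var (i + 1)
  | k, lam M => lam (lift (k + 1) M)
  | k, app M N => app (lift k M) (lift k N)
  | k, tryc M e N => tryc (lift k M) e (lift k N)
  | _, raise e => raise e
  | _, zero => zero
  | _, succ => succ
  | _, natrec => natrec
  | _, nil => nil
  | _, cons => cons
  | _, foldr => foldr

/-- Capture-avoiding substitution `M[k := N]` (de Bruijn). -/
def subst : ℕ → Tm → Tm → Tm
  | k, N, var i => if i = k then N else if k < i then var (i - 1) else var i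
  | k, N, lam M => lam (subst (k + 1) (lift 0 N) M)
  | k, N, app M P => app (subst k N M) (subst k N P)
  | k, N, tryc M e P => tryc (subst k N M) e (subst k N P)
  | _, _, raise e => raise e
  | _, _, zero => zero
  | _, _, succ => succ
  | _, _, natrec => natrec
  | _, _, nil => nil
  | _, _, cons => cons
  | _, _, foldr => foldr

end Tm

open Tm

/-- Regular values of Fx. -/
inductive RegVal : Tm → Prop
  | lam (M) : RegVal (lam M)
  | zero : RegVal zero
  | succ : RegVal succ
  | succApp (N) : RegVal (app succ N)
  | natrec : RegVal natrec
  | natrec1 (M) : RegVal (app natrec M)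
  | natrec2 (M N) : RegVal (app (app natrec M) N)
  | nil : RegVal nil
  | cons : RegVal cons
  | cons1 (M) : RegVal (app cons M)
  | cons2 (M N) : RegVal (app (app cons M) N)
  | foldr : RegVal foldr
  | foldr1 (M) : RegVal (app foldr M)
  | foldr2 (M N) : RegVal (app (app foldr M) N)

/-- The notion of reduction ▷ of Fx. -/
inductive Head : Tm → Tm → Prop
  | beta (M N) : Head (app (lam M) N) (subst 0 N M)
  | raiseApp (e M) : Head (app (raise e) M) (raise e)
  | tryCatch (e N) : Head (tryc (raise e) e N) N
  | tryOther (e e' N) : e ≠ e' → Head (tryc (raise e') e N) (raise e')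
  | tryVal (V e N) : RegVal V → Head (tryc V e N) V
  | recZero (X Y) : Head (app (app (app natrec X) Y) zero) X
  | recSucc (X Y N) :
      Head (app (app (app natrec X) Y) (app succ N))
        (app (app Y N) (app (app (app natrec X) Y) N))
  | recRaise (X Y e) : Head (app (app (app natrec X) Y) (raise e)) (raise e)
  | foldNil (X Y) : Head (app (app (app foldr X) Y) nil) X
  | foldCons (X Y E L) :
      Head (app (app (app foldr X) Y) (app (app cons E) L))
        (app (app (app Y E) L) (app (app (app foldr X) Y) L))
  | foldRaise (X Y e) : Head (app (app (app foldr X) Y) (raise e)) (raise e)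

/-- One-step reduction: compatible closure of ▷. -/
inductive Red : Tm → Tm → Prop
  | head {M N} : Head M N → Red M N
  | appL {M M' N} : Red M M' → Red (app M N) (app M' N)
  | appR {M N N'} : Red N N' → Red (app M N) (app M N')
  | lam {M M'} : Red M M' → Red (lam M) (lam M')
  | tryL {M M' e N} : Red M M' → Red (tryc M e N) (tryc M' e N)
  | tryR {M e N N'} : Red N N' → Red (tryc M e N) (tryc M e N')

/-- Many-step reduction. -/
abbrev RedStar : Tm → Tm → Prop := Relation.ReflTransGen Red

/-- Parallel reduction ⇒ for Fx. -/
inductive Par : Tm → Tm → Prop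
  | refl (M) : Par M M
  | lam {M M'} : Par M M' → Par (lam M) (lam M')
  | app {M M' N N'} : Par M M' → Par N N' → Par (app M N) (app M' N')
  | beta {M M' N N'} : Par M M' → Par N N' → Par (app (lam M) N) (subst 0 N' M')
  | raiseApp (e M) : Par (app (raise e) M) (raise e)
  | tryCatch {e N N'} : Par N N' → Par (tryc (raise e) e N) N'
  | tryOther (e e' N) : e ≠ e' → Par (tryc (raise e') e N) (raise e')
  | tryCong {M M' e N N'} : Par M M' → Par N N' → Par (tryc M e N) (tryc M' e N')
  | tryVal {V V' e N} : RegVal V → Par V V' → Par (tryc V e N) V'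
  | recZero {X X'} (Y) : Par X X' → Par (app (app (app natrec X) Y) zero) X'
  | recSucc {X X' Y Y' N N'} : Par X X' → Par Y Y' → Par N N' →
      Par (app (app (app natrec X) Y) (app succ N))
        (app (app Y' N') (app (app (app natrec X') Y') N'))
  | recRaise (X Y e) : Par (app (app (app natrec X) Y) (raise e)) (raise e)
  | foldNil {X X'} (Y) : Par X X' → Par (app (app (app foldr X) Y) nil) X'
  | foldCons {X X' Y Y' E E' L L'} : Par X X' → Par Y Y' → Par E E' → Par L L' →
      Par (app (app (app foldr X) Y) (app (app cons E) L))
        (app (app (app Y' E') L') (app (app (app foldr X') Y') L'))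
  | foldRaise (X Y e) : Par (app (app (app foldr X) Y) (raise e)) (raise e)

/-!
Takahashi's method. The complete development `cd M` contracts, simultaneously, every redex
visible in `M`: β-redexes, exception redexes, and recursor redexes whose scrutinee already has
the matching head. Every parallel reduct of `M` reduces to `cd M` in one parallel step
(`Par.triangle`), so `cd M` closes any two of them. Beyond the pure λ-calculus the one new
ingredient is that regular values are stable under `⇒` (`RegVal.par`), which keeps the
`try V with …` rule compatible with reducing `V`.
-/

namespace Tm

theorem lift_lift (M : Tm) {j k : ℕ} (h : j ≤ k) :
    lift j (lift k M) = lift (k + 1) (lift j M) := by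
  induction M generalizing j k with
  | var i => grind [lift]
  | lam M ih => simp only [lift, ih (Nat.succ_le_succ h)]
  | app M N ihM ihN | tryc M e N ihM ihN => simp only [lift, ihM h, ihN h]
  | _ => rfl

theorem subst_lift (M N : Tm) (k : ℕ) : subst k N (lift k M) = M := by
  induction M generalizing k N with
  | var i => grind [lift, subst]
  | lam M ih => simp only [lift, subst, ih]
  | app M P ihM ihP | tryc M e P ihM ihP => simp only [lift, subst, ihM, ihP]
  | _ => rfl

theorem lift_subst_of_le (M N : Tm) {j k : ℕ} (h : j ≤ k) :
    lift k (subst j N M) = subst j (lift k N) (lift (k + 1) M) := by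
  induction M generalizing j k N with
  | var i => grind [lift, subst]
  | lam M ih => simp only [subst, lift, ih _ (Nat.succ_le_succ h), lift_lift N (Nat.zero_le k)]
  | app M P ihM ihP | tryc M e P ihM ihP => simp only [subst, lift, ihM _ h, ihP _ h]
  | _ => rfl

theorem lift_subst_of_ge (M N : Tm) {j k : ℕ} (h : k ≤ j) :
    lift k (subst j N M) = subst (j + 1) (lift k N) (lift k M) := by
  induction M generalizing j k N with
  | var i => grind [lift, subst]
  | lam M ih => simp only [subst, lift, ih _ (Nat.succ_le_succ h), lift_lift N (Nat.zero_le k)]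
  | app M P ihM ihP | tryc M e P ihM ihP => simp only [subst, lift, ihM _ h, ihP _ h]
  | _ => rfl

theorem subst_subst (M N P : Tm) {j k : ℕ} (h : j ≤ k) :
    subst k N (subst j P M) = subst j (subst k N P) (subst (k + 1) (lift j N) M) := by
  induction M generalizing j k N P with
  | var i => grind [lift, subst, subst_lift]
  | lam M ih =>
    simp only [subst, ih _ _ (Nat.succ_le_succ h), lift_subst_of_ge P N (Nat.zero_le k),
      lift_lift N (Nat.zero_le j)]
  | app M Q ihM ihQ | tryc M e Q ihM ihQ => simp only [subst, ihM _ _ h, ihQ _ _ h]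
  | _ => rfl

end Tm

theorem RegVal.lift {V : Tm} (h : RegVal V) (k : ℕ) : RegVal (Tm.lift k V) := by
  cases h <;> constructor

theorem RegVal.subst {V : Tm} (h : RegVal V) (k : ℕ) (N : Tm) : RegVal (Tm.subst k N V) := by
  cases h <;> constructor

theorem par_lam_inv {M T : Tm} (h : Par (lam M) T) : ∃ M', T = lam M' ∧ Par M M' := by
  cases h with
  | refl => exact ⟨M, rfl, Par.refl M⟩
  | lam h => exact ⟨_, rfl, h⟩

theorem par_succApp_inv {N T : Tm} (h : Par (app succ N) T) :
    ∃ N', T = app succ N' ∧ Par N N' := by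
  cases h with
  | refl => exact ⟨N, rfl, Par.refl N⟩
  | app h hN => cases h; exact ⟨_, rfl, hN⟩

theorem par_natrec1_inv {X T : Tm} (h : Par (app natrec X) T) :
    ∃ X', T = app natrec X' ∧ Par X X' := by
  cases h with
  | refl => exact ⟨X, rfl, Par.refl X⟩
  | app h hX => cases h; exact ⟨_, rfl, hX⟩

theorem par_natrec2_inv {X Y T : Tm} (h : Par (app (app natrec X) Y) T) :
    ∃ X' Y', T = app (app natrec X') Y' ∧ Par X X' ∧ Par Y Y' := by
  cases h with
  | refl => exact ⟨X, Y, rfl, Par.refl X, Par.refl Y⟩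
  | app h hY =>
    obtain ⟨X', rfl, hX⟩ := par_natrec1_inv h
    exact ⟨X', _, rfl, hX, hY⟩

theorem par_cons1_inv {E T : Tm} (h : Par (app cons E) T) :
    ∃ E', T = app cons E' ∧ Par E E' := by
  cases h with
  | refl => exact ⟨E, rfl, Par.refl E⟩
  | app h hE => cases h; exact ⟨_, rfl, hE⟩

theorem par_cons2_inv {E L T : Tm} (h : Par (app (app cons E) L) T) :
    ∃ E' L', T = app (app cons E') L' ∧ Par E E' ∧ Par L L' := by
  cases h with
  | refl => exact ⟨E, L, rfl, Par.refl E, Par.refl L⟩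
  | app h hL =>
    obtain ⟨E', rfl, hE⟩ := par_cons1_inv h
    exact ⟨E', _, rfl, hE, hL⟩

theorem par_foldr1_inv {X T : Tm} (h : Par (app foldr X) T) :
    ∃ X', T = app foldr X' ∧ Par X X' := by
  cases h with
  | refl => exact ⟨X, rfl, Par.refl X⟩
  | app h hX => cases h; exact ⟨_, rfl, hX⟩

theorem par_foldr2_inv {X Y T : Tm} (h : Par (app (app foldr X) Y) T) :
    ∃ X' Y', T = app (app foldr X') Y' ∧ Par X X' ∧ Par Y Y' := by
  cases h with
  | refl => exact ⟨X, Y, rfl, Par.refl X, Par.refl Y⟩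
  | app h hY =>
    obtain ⟨X', rfl, hX⟩ := par_foldr1_inv h
    exact ⟨X', _, rfl, hX, hY⟩

theorem RegVal.par {V V' : Tm} (h : RegVal V) (p : Par V V') : RegVal V' := by
  cases h with
  | zero | succ | natrec | nil | cons | foldr => cases p; constructor
  | lam => obtain ⟨_, rfl, _⟩ := par_lam_inv p; constructor
  | succApp => obtain ⟨_, rfl, _⟩ := par_succApp_inv p; constructor
  | natrec1 => obtain ⟨_, rfl, _⟩ := par_natrec1_inv p; constructor
  | natrec2 => obtain ⟨_, _, rfl, _⟩ := par_natrec2_inv p; constructor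
  | cons1 => obtain ⟨_, rfl, _⟩ := par_cons1_inv p; constructor
  | cons2 => obtain ⟨_, _, rfl, _⟩ := par_cons2_inv p; constructor
  | foldr1 => obtain ⟨_, rfl, _⟩ := par_foldr1_inv p; constructor
  | foldr2 => obtain ⟨_, _, rfl, _⟩ := par_foldr2_inv p; constructor

theorem Par.lift {M M' : Tm} (h : Par M M') (k : ℕ) : Par (Tm.lift k M) (Tm.lift k M') := by
  induction h generalizing k with
  | refl => exact .refl _
  | lam _ ih => exact .lam (ih _)
  | app _ _ ihM ihN => exact .app (ihM k) (ihN k)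
  | beta _ _ ihM ihN =>
    rw [Tm.lift_subst_of_le _ _ (Nat.zero_le k)]
    exact .beta (ihM _) (ihN k)
  | raiseApp => exact .raiseApp _ _
  | tryCatch _ ih => exact .tryCatch (ih k)
  | tryOther _ _ _ hne => exact .tryOther _ _ _ hne
  | tryCong _ _ ihM ihN => exact .tryCong (ihM k) (ihN k)
  | tryVal hV _ ih => exact .tryVal (hV.lift k) (ih k)
  | recZero _ _ ih => exact .recZero _ (ih k)
  | recSucc _ _ _ ihX ihY ihN => exact .recSucc (ihX k) (ihY k) (ihN k)
  | recRaise => exact .recRaise _ _ _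
  | foldNil _ _ ih => exact .foldNil _ (ih k)
  | foldCons _ _ _ _ ihX ihY ihE ihL => exact .foldCons (ihX k) (ihY k) (ihE k) (ihL k)
  | foldRaise => exact .foldRaise _ _ _

theorem Par.subst_right (M : Tm) {N N' : Tm} (h : Par N N') (k : ℕ) :
    Par (Tm.subst k N M) (Tm.subst k N' M) := by
  induction M generalizing k N N' with
  | var i => simp only [Tm.subst]; split_ifs <;> first | exact h | exact .refl _
  | lam M ih => exact .lam (ih (h.lift 0) _)
  | app M P ihM ihP => exact .app (ihM h k) (ihP h k)
  | tryc M e P ihM ihP => exact .tryCong (ihM h k) (ihP h k)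
  | _ => exact .refl _

theorem Par.subst {M M' N N' : Tm} (hM : Par M M') (hN : Par N N') (k : ℕ) :
    Par (Tm.subst k N M) (Tm.subst k N' M') := by
  induction hM generalizing k N N' with
  | refl M => exact hN.subst_right M k
  | lam _ ih => exact .lam (ih (hN.lift 0) _)
  | app _ _ ihM ihP => exact .app (ihM hN k) (ihP hN k)
  | beta _ _ ihM ihP =>
    rw [Tm.subst_subst _ _ _ (Nat.zero_le k)]
    exact .beta (ihM (hN.lift 0) _) (ihP hN k)
  | raiseApp => exact .raiseApp _ _
  | tryCatch _ ih => exact .tryCatch (ih hN k)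
  | tryOther _ _ _ hne => exact .tryOther _ _ _ hne
  | tryCong _ _ ihM ihP => exact .tryCong (ihM hN k) (ihP hN k)
  | tryVal hV _ ih => exact .tryVal (hV.subst k _) (ih hN k)
  | recZero _ _ ih => exact .recZero _ (ih hN k)
  | recSucc _ _ _ ihX ihY ihP => exact .recSucc (ihX hN k) (ihY hN k) (ihP hN k)
  | recRaise => exact .recRaise _ _ _
  | foldNil _ _ ih => exact .foldNil _ (ih hN k)
  | foldCons _ _ _ _ ihX ihY ihE ihL =>
    exact .foldCons (ihX hN k) (ihY hN k) (ihE hN k) (ihL hN k)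
  | foldRaise => exact .foldRaise _ _ _

open Classical in
noncomputable def cd : Tm → Tm
  | .lam M => .lam (cd M)
  | .app (.lam M) N => Tm.subst 0 (cd N) (cd M)
  | .app (.raise e) _ => .raise e
  | .app (.app (.app .natrec X) _) .zero => cd X
  | .app (.app (.app .natrec X) Y) (.app .succ N) =>
      .app (.app (cd Y) (cd N)) (.app (.app (.app .natrec (cd X)) (cd Y)) (cd N))
  | .app (.app (.app .natrec _) _) (.raise e) => .raise e
  | .app (.app (.app .foldr X) _) .nil => cd X
  | .app (.app (.app .foldr X) Y) (.app (.app .cons E) L) =>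
      .app (.app (.app (cd Y) (cd E)) (cd L)) (.app (.app (.app .foldr (cd X)) (cd Y)) (cd L))
  | .app (.app (.app .foldr _) _) (.raise e) => .raise e
  | .app M N => .app (cd M) (cd N)
  | .tryc (.raise e') e N => if e' = e then cd N else .raise e'
  | .tryc M e N => if RegVal M then cd M else .tryc (cd M) e (cd N)
  | M => M

theorem par_cd (M : Tm) : Par M (cd M) := by
  induction M using cd.induct <;> simp only [cd]
  all_goals try split_ifs
  all_goals solve_by_elim [Par.lam, Par.beta, Par.raiseApp, Par.tryCatch, Par.tryOther, Par.tryVal,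
    Par.tryCong, Par.recZero, Par.recSucc, Par.recRaise, Par.foldNil, Par.foldCons, Par.foldRaise,
    Par.app, Par.refl, Ne.symm]

theorem par_natrec_cd {X Y Z X' Y' Z' : Tm}
    (hXY : Par (app (app natrec X') Y') (cd (app (app natrec X) Y)))
    (hZ : Par Z Z') (ihZ : Par Z' (cd Z)) :
    Par (app (app (app natrec X') Y') Z') (cd (app (app (app natrec X) Y) Z)) := by
  obtain ⟨_, _, h, hX, hY⟩ := par_natrec2_inv hXY
  simp only [cd, Tm.app.injEq, true_and] at h
  obtain ⟨rfl, rfl⟩ := h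
  cases Z with
  | zero => cases hZ; exact .recZero _ hX
  | raise e => cases hZ; exact .recRaise _ _ e
  | app S N =>
    cases S with
    | succ =>
      obtain ⟨N', rfl, -⟩ := par_succApp_inv hZ
      obtain ⟨_, h, hN⟩ := par_succApp_inv ihZ
      simp only [cd, Tm.app.injEq, true_and] at h
      subst h
      exact .recSucc hX hY hN
    | _ => exact .app hXY ihZ
  | _ => exact .app hXY ihZ

theorem par_foldr_cd {X Y Z X' Y' Z' : Tm}
    (hXY : Par (app (app foldr X') Y') (cd (app (app foldr X) Y)))
    (hZ : Par Z Z') (ihZ : Par Z' (cd Z)) :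
    Par (app (app (app foldr X') Y') Z') (cd (app (app (app foldr X) Y) Z)) := by
  obtain ⟨_, _, h, hX, hY⟩ := par_foldr2_inv hXY
  simp only [cd, Tm.app.injEq, true_and] at h
  obtain ⟨rfl, rfl⟩ := h
  cases Z with
  | nil => cases hZ; exact .foldNil _ hX
  | raise e => cases hZ; exact .foldRaise _ _ e
  | app C L =>
    cases C with
    | app C E =>
      cases C with
      | cons =>
        obtain ⟨E', L', rfl, -⟩ := par_cons2_inv hZ
        obtain ⟨_, _, h, hE, hL⟩ := par_cons2_inv ihZ
        simp only [cd, Tm.app.injEq, true_and] at h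
        obtain ⟨rfl, rfl⟩ := h
        exact .foldCons hX hY hE hL
      | _ => exact .app hXY ihZ
    | _ => exact .app hXY ihZ
  | _ => exact .app hXY ihZ

-- In the shapes not matched by a redex clause, `cd (app A B)` unfolds to `app (cd A) (cd B)`.
theorem par_app_cd {A B A' B' : Tm} (hA : Par A A') (hB : Par B B')
    (ihA : Par A' (cd A)) (ihB : Par B' (cd B)) : Par (app A' B') (cd (app A B)) := by
  cases A with
  | lam M =>
    obtain ⟨_, rfl, -⟩ := par_lam_inv hA
    obtain ⟨_, h, hM⟩ := par_lam_inv ihA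
    cases Tm.lam.inj h
    exact .beta hM ihB
  | raise e => cases hA; exact .raiseApp e B'
  | app F Y =>
    cases F with
    | app R X =>
      cases R with
      | natrec =>
        obtain ⟨X', Y', rfl, -⟩ := par_natrec2_inv hA
        exact par_natrec_cd ihA hB ihB
      | foldr =>
        obtain ⟨X', Y', rfl, -⟩ := par_foldr2_inv hA
        exact par_foldr_cd ihA hB ihB
      | _ => exact .app ihA ihB
    | _ => exact .app ihA ihB
  | _ => exact .app ihA ihB

theorem cd_tryc_of_regVal {V : Tm} (hV : RegVal V) (e : ExnName) (N : Tm) :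
    cd (tryc V e N) = cd V := by
  cases hV <;> exact if_pos (by constructor)

theorem par_tryc_cd {A B A' B' : Tm} {e : ExnName} (hA : Par A A') (ihA : Par A' (cd A))
    (ihB : Par B' (cd B)) : Par (tryc A' e B') (cd (tryc A e B)) := by
  cases A with
  | raise e' =>
    cases hA
    by_cases he : e' = e
    · subst he; simp only [cd, if_true]; exact .tryCatch ihB
    · simp only [cd, if_neg he]; exact .tryOther _ _ _ (Ne.symm he)
  | _ =>
    simp only [cd]
    split_ifs with hV
    · exact .tryVal (hV.par hA) ihA
    · exact .tryCong ihA ihB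

theorem Par.triangle {M N : Tm} (h : Par M N) : Par N (cd M) := by
  induction h with
  | refl M => exact par_cd M
  | lam _ ih => exact .lam ih
  | app hA hB ihA ihB => exact par_app_cd hA hB ihA ihB
  | beta _ _ ihM ihN => exact ihM.subst ihN 0
  | tryCatch _ ih => simpa [cd] using ih
  | tryOther _ _ _ hne => simpa [cd, hne.symm] using .refl _
  | tryCong hA _ ihA ihB => exact par_tryc_cd hA ihA ihB
  | tryVal hV _ ih => rwa [cd_tryc_of_regVal hV]
  | recZero _ _ ih | foldNil _ _ ih => exact ih
  | recSucc _ _ _ ihX ihY ihN =>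
    exact .app (.app ihY ihN) (.app (.app (.app (.refl _) ihX) ihY) ihN)
  | foldCons _ _ _ _ ihX ihY ihE ihL =>
    exact .app (.app (.app ihY ihE) ihL) (.app (.app (.app (.refl _) ihX) ihY) ihL)
  | raiseApp | recRaise | foldRaise => exact .refl _

theorem fx_par_diamond (M N N' : Tm) (h1 : Par M N) (h2 : Par M N') :
    ∃ P, Par N P ∧ Par N' P :=
  ⟨cd M, h1.triangle, h2.triangle⟩
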